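/- arXiv:1603.08964 — 3 statements merged into one kernel-verified Lean document; each statement's English description precedes it below -/
import Mathlib

section
/- For every t ∈ (0,1), one has t·(1 − log t) > sin((π/2)·t). -/
/-!
For `t ≤ 1/2` we have `sin x < x` and `1 - log t ≥ 1 + log 2 > π/2`. For `t > 1/2` put `s = 1 - t`:
then `sin (π/2 t) = cos (π/2 s)`, which the quartic Taylor bound puts below `1 - s²`, while
`log t < t - 1` gives `t (1 - log t) > t (2 - t) = 1 - s²`.
-/

open Real

lemma pi_div_two_lt_one_sub_log {t : ℝ} (ht0 : 0 < t) (ht : t ≤ 1 / 2) : π / 2 < 1 - log t := by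
  have hlog : log t ≤ -log 2 := by
    simpa only [one_div, log_inv] using log_le_log ht0 ht
  linarith [pi_lt_d2, log_two_gt_d9]

lemma cos_pi_div_two_mul_lt_one_sub_sq {s : ℝ} (hs0 : 0 < s) (hs : s ≤ 1 / 2) :
    cos (π / 2 * s) < 1 - s ^ 2 := by
  set x := π / 2 * s with hx
  have hx0 : 0 < x := by positivity
  have hx1 : x ≤ 1 := by nlinarith [pi_lt_four]
  have htaylor : cos x ≤ 1 - x ^ 2 / 2 + x ^ 4 * (5 / 96) := by
    have := cos_bound (abs_le.mpr ⟨by linarith, hx1⟩)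
    rw [abs_of_pos hx0] at this
    linarith [(abs_le.mp this).2]
  -- `x⁴ ≤ x²` on `[0, 1]`, and `(43/96) x² = (43 π² / 384) s² > s²` because `π > 3`.
  have hquartic : x ^ 4 ≤ x ^ 2 := pow_le_pow_of_le_one hx0.le hx1 (by norm_num)
  have hquadratic : s ^ 2 < 43 / 96 * x ^ 2 := by
    have hpi : 9 / 4 < (π / 2) ^ 2 := by nlinarith [pi_gt_three]
    rw [hx, mul_pow]
    nlinarith [mul_lt_mul_of_pos_right hpi (pow_pos hs0 2)]
  linarith

/-- Lemma 7: for every t ∈ (0,1), t(1 − log t) > sin((π/2)t). -/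
theorem stmt5 (t : ℝ) (ht : t ∈ Set.Ioo (0:ℝ) 1) :
    t * (1 - Real.log t) > Real.sin (Real.pi / 2 * t) := by
  obtain ⟨ht0, ht1⟩ := ht
  rcases le_or_gt t (1 / 2) with hsmall | hlarge
  · calc sin (π / 2 * t) < π / 2 * t := sin_lt (by positivity)
      _ = t * (π / 2) := mul_comm _ _
      _ < t * (1 - log t) := mul_lt_mul_of_pos_left (pi_div_two_lt_one_sub_log ht0 hsmall) ht0
  · have hlog : log t < t - 1 := log_lt_sub_one_of_pos ht0 ht1.ne
    calc sin (π / 2 * t) = cos (π / 2 * (1 - t)) := by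
          rw [← cos_pi_div_two_sub]; ring_nf
      _ < 1 - (1 - t) ^ 2 := cos_pi_div_two_mul_lt_one_sub_sq (by linarith) (by linarith)
      _ = t * (2 - t) := by ring
      _ < t * (1 - log t) := mul_lt_mul_of_pos_left (by linarith) ht0
end

section
/- For any probability space (Ω, F, P) and any sub-σ-fields A and B of F, one has ρ(A, B) ≤ ψ(A, B). -/
open MeasureTheory ProbabilityTheory
open scoped ENNReal

noncomputable def eventCorr {Ω : Type*} {_mΩ : MeasurableSpace Ω} (P : Measure Ω)
    (A B : Set Ω) : ℝ :=
  ((P (A ∩ B)).toReal - (P A).toReal * (P B).toReal) /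
    Real.sqrt ((P A).toReal * (1 - (P A).toReal) * (P B).toReal * (1 - (P B).toReal))

noncomputable def tauDep {Ω : Type*} {_mΩ : MeasurableSpace Ω} (P : Measure Ω)
    (𝒜 ℬ : MeasurableSpace Ω) : ℝ :=
  sSup {r : ℝ | ∃ A B : Set Ω, MeasurableSet[𝒜] A ∧ MeasurableSet[ℬ] B ∧ r = |eventCorr P A B|}

noncomputable def lambdaDep {Ω : Type*} {_mΩ : MeasurableSpace Ω} (P : Measure Ω)
    (𝒜 ℬ : MeasurableSpace Ω) : ℝ :=
  sSup {r : ℝ | ∃ A B : Set Ω, MeasurableSet[𝒜] A ∧ MeasurableSet[ℬ] B ∧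
    r = |(P (A ∩ B)).toReal - (P A).toReal * (P B).toReal| /
      Real.sqrt ((P A).toReal * (P B).toReal)}

noncomputable def psiDep {Ω : Type*} {_mΩ : MeasurableSpace Ω} (P : Measure Ω)
    (𝒜 ℬ : MeasurableSpace Ω) : ℝ≥0∞ :=
  ⨆ (A : Set Ω) (_ : MeasurableSet[𝒜] A) (B : Set Ω) (_ : MeasurableSet[ℬ] B),
    ENNReal.ofReal (|(P (A ∩ B)).toReal - (P A).toReal * (P B).toReal| /
      ((P A).toReal * (P B).toReal))

noncomputable def corrRV {Ω : Type*} {_mΩ : MeasurableSpace Ω} (P : Measure Ω)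
    (X Y : Ω → ℝ) : ℝ :=
  (∫ ω, X ω * Y ω ∂P - (∫ ω, X ω ∂P) * (∫ ω, Y ω ∂P)) /
    Real.sqrt ((∫ ω, X ω ^ 2 ∂P - (∫ ω, X ω ∂P) ^ 2) *
      (∫ ω, Y ω ^ 2 ∂P - (∫ ω, Y ω ∂P) ^ 2))

noncomputable def rhoDep {Ω : Type*} {_mΩ : MeasurableSpace Ω} (P : Measure Ω)
    (𝒜 ℬ : MeasurableSpace Ω) : ℝ :=
  sSup {r : ℝ | ∃ X Y : Ω → ℝ, Measurable[𝒜] X ∧ Measurable[ℬ] Y ∧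
    MemLp X 2 P ∧ MemLp Y 2 P ∧ r = |corrRV P X Y|}

/-!
On rectangles the ψ-coefficient gives |P(A ∩ B) - P(A) P(B)| ≤ ψ P(A) P(B). Since covariance is
bilinear and `E|·|` is additive over disjointly supported summands, this becomes
|Cov(f, g)| ≤ ψ E|f| E|g| for 𝒜-simple f and ℬ-simple g, and then for all square-integrable
𝒜-measurable X and ℬ-measurable Y by L²-approximation. Applied to X - EX and Y - EY, together
with E|X - EX| ≤ √Var X, it yields |Corr(X, Y)| ≤ ψ.
-/

open Filter Topology

section L2Convergence

variable {Ω : Type*} {mΩ : MeasurableSpace Ω} {P : Measure Ω}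

lemma integral_mul_eq_inner_toLp {f g : Ω → ℝ} (hf : MemLp f 2 P) (hg : MemLp g 2 P) :
    ∫ ω, f ω * g ω ∂P = inner ℝ (hf.toLp f) (hg.toLp g) := by
  rw [L2.inner_def]
  refine integral_congr_ae ?_
  filter_upwards [hf.coeFn_toLp, hg.coeFn_toLp] with ω hfω hgω
  simp [hfω, hgω, mul_comm]

variable {f g : ℕ → Ω → ℝ} {F G : Ω → ℝ}

lemma tendsto_integral_mul_of_tendsto_eLpNorm (hf : ∀ n, MemLp (f n) 2 P) (hF : MemLp F 2 P)
    (hg : ∀ n, MemLp (g n) 2 P) (hG : MemLp G 2 P)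
    (hfF : Tendsto (fun n ↦ eLpNorm (f n - F) 2 P) atTop (𝓝 0))
    (hgG : Tendsto (fun n ↦ eLpNorm (g n - G) 2 P) atTop (𝓝 0)) :
    Tendsto (fun n ↦ ∫ ω, f n ω * g n ω ∂P) atTop (𝓝 (∫ ω, F ω * G ω ∂P)) := by
  simp_rw [integral_mul_eq_inner_toLp (hf _) (hg _), integral_mul_eq_inner_toLp hF hG]
  exact ((Lp.tendsto_Lp_iff_tendsto_eLpNorm'' f hf F hF).2 hfF).inner
    ((Lp.tendsto_Lp_iff_tendsto_eLpNorm'' g hg G hG).2 hgG)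

variable [IsProbabilityMeasure P]

lemma tendsto_integral_of_tendsto_eLpNorm (hf : ∀ n, MemLp (f n) 2 P) (hF : MemLp F 2 P)
    (hfF : Tendsto (fun n ↦ eLpNorm (f n - F) 2 P) atTop (𝓝 0)) :
    Tendsto (fun n ↦ ∫ ω, f n ω ∂P) atTop (𝓝 (∫ ω, F ω ∂P)) := by
  simpa using tendsto_integral_mul_of_tendsto_eLpNorm hf hF (fun _ ↦ memLp_const 1)
    (memLp_const 1) hfF (by simp)

lemma tendsto_integral_abs_of_tendsto_eLpNorm (hf : ∀ n, MemLp (f n) 2 P) (hF : MemLp F 2 P)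
    (hfF : Tendsto (fun n ↦ eLpNorm (f n - F) 2 P) atTop (𝓝 0)) :
    Tendsto (fun n ↦ ∫ ω, |f n ω| ∂P) atTop (𝓝 (∫ ω, |F ω| ∂P)) := by
  refine tendsto_integral_of_tendsto_eLpNorm (fun n ↦ (hf n).abs) hF.abs
    (tendsto_of_tendsto_of_tendsto_of_le_of_le tendsto_const_nhds hfF (fun _ ↦ zero_le)
      fun n ↦ eLpNorm_mono fun ω ↦ abs_abs_sub_abs_le_abs_sub (f n ω) (F ω))

lemma tendsto_covariance_of_tendsto_eLpNorm (hf : ∀ n, MemLp (f n) 2 P) (hF : MemLp F 2 P)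
    (hg : ∀ n, MemLp (g n) 2 P) (hG : MemLp G 2 P)
    (hfF : Tendsto (fun n ↦ eLpNorm (f n - F) 2 P) atTop (𝓝 0))
    (hgG : Tendsto (fun n ↦ eLpNorm (g n - G) 2 P) atTop (𝓝 0)) :
    Tendsto (fun n ↦ cov[f n, g n; P]) atTop (𝓝 cov[F, G; P]) := by
  simp_rw [covariance_eq_sub (hf _) (hg _), covariance_eq_sub hF hG]
  exact (tendsto_integral_mul_of_tendsto_eLpNorm hf hF hg hG hfF hgG).sub
    ((tendsto_integral_of_tendsto_eLpNorm hf hF hfF).mul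
      (tendsto_integral_of_tendsto_eLpNorm hg hG hgG))

end L2Convergence

section SubSigmaAlgebra

variable {Ω : Type*} {mΩ : MeasurableSpace Ω} {P : Measure Ω} {𝒜 : MeasurableSpace Ω}

lemma memLp_simpleFunc_of_le [IsFiniteMeasure P] (h𝒜 : 𝒜 ≤ mΩ) (f : @SimpleFunc Ω 𝒜 ℝ)
    (p : ℝ≥0∞) : MemLp f p P :=
  have ⟨C, hC⟩ := f.exists_forall_norm_le
  MemLp.of_bound ((f.measurable.mono h𝒜 le_rfl).aestronglyMeasurable) C (ae_of_all _ hC)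

lemma exists_simpleFunc_tendsto_eLpNorm (h𝒜 : 𝒜 ≤ mΩ) {X : Ω → ℝ} (hX : Measurable[𝒜] X)
    (hX2 : MemLp X 2 P) :
    ∃ f : ℕ → @SimpleFunc Ω 𝒜 ℝ, Tendsto (fun n ↦ eLpNorm (⇑(f n) - X) 2 P) atTop (𝓝 0) := by
  set f : ℕ → @SimpleFunc Ω 𝒜 ℝ := fun n ↦ SimpleFunc.approxOn X hX Set.univ 0 trivial n
  have hXtrim : eLpNorm (fun ω ↦ X ω - 0) 2 (P.trim h𝒜) < ∞ := by
    rw [eLpNorm_trim h𝒜 (by simpa using hX.stronglyMeasurable)]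
    simpa using hX2.eLpNorm_lt_top
  have hlim : Tendsto (fun n ↦ eLpNorm (⇑(f n) - X) 2 (P.trim h𝒜)) atTop (𝓝 0) :=
    SimpleFunc.tendsto_approxOn_Lp_eLpNorm hX (Set.mem_univ 0) (by simp)
      (ae_of_all _ fun _ ↦ subset_closure trivial) hXtrim
  refine ⟨f, hlim.congr fun n ↦ eLpNorm_trim h𝒜 ?_⟩
  exact (f n).stronglyMeasurable.sub hX.stronglyMeasurable

end SubSigmaAlgebra

section CovarianceInequality

variable {Ω : Type*} {mΩ : MeasurableSpace Ω} {P : Measure Ω}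

lemma integral_abs_indicator_const {s : Set Ω} (hs : MeasurableSet s) (c : ℝ) :
    ∫ ω, |s.indicator (fun _ ↦ c) ω| ∂P = P.real s * |c| := by
  simp_rw [← Real.norm_eq_abs, norm_indicator_eq_indicator_norm, integral_indicator_const _ hs,
    smul_eq_mul]

variable [IsProbabilityMeasure P]

lemma covariance_indicator_indicator {s t : Set Ω} (hs : MeasurableSet s) (ht : MeasurableSet t)
    (c d : ℝ) :
    cov[s.indicator (fun _ ↦ c), t.indicator (fun _ ↦ d); P] =
      c * d * (P.real (s ∩ t) - P.real s * P.real t) := by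
  have hprod : s.indicator (fun _ ↦ c) * t.indicator (fun _ ↦ d) =
      (s ∩ t).indicator (fun _ ↦ c * d) := by
    ext ω
    by_cases hωs : ω ∈ s <;> by_cases hωt : ω ∈ t <;> simp [hωs, hωt]
  rw [covariance_eq_sub (memLp_indicator_const 2 hs c (.inr (measure_ne_top P s)))
    (memLp_indicator_const 2 ht d (.inr (measure_ne_top P t))), hprod,
    integral_indicator_const _ (hs.inter ht), integral_indicator_const _ hs,
    integral_indicator_const _ ht]
  simp only [smul_eq_mul]
  ring

lemma abs_covariance_add_left_le {u₁ u₂ v : Ω → ℝ} {ψ : ℝ} (hu₁ : MemLp u₁ 2 P)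
    (hu₂ : MemLp u₂ 2 P) (hv : MemLp v 2 P)
    (hdisj : Disjoint (Function.support u₁) (Function.support u₂))
    (h₁ : |cov[u₁, v; P]| ≤ ψ * ((∫ ω, |u₁ ω| ∂P) * ∫ ω, |v ω| ∂P))
    (h₂ : |cov[u₂, v; P]| ≤ ψ * ((∫ ω, |u₂ ω| ∂P) * ∫ ω, |v ω| ∂P)) :
    |cov[u₁ + u₂, v; P]| ≤ ψ * ((∫ ω, |(u₁ + u₂) ω| ∂P) * ∫ ω, |v ω| ∂P) := by
  have habs : (fun ω ↦ |(u₁ + u₂) ω|) = fun ω ↦ |u₁ ω| + |u₂ ω| := by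
    ext ω
    by_cases h₁ω : u₁ ω = 0
    · simp [h₁ω]
    · have h₂ω : u₂ ω = 0 := Function.notMem_support.1 (Set.disjoint_left.1 hdisj h₁ω)
      simp [h₂ω]
  rw [covariance_add_left hu₁ hu₂ hv, habs, integral_add (hu₁.integrable one_le_two).abs
    (hu₂.integrable one_le_two).abs]
  calc |cov[u₁, v; P] + cov[u₂, v; P]| ≤ |cov[u₁, v; P]| + |cov[u₂, v; P]| := abs_add_le _ _
    _ ≤ _ := by linarith

lemma MeasureTheory.SimpleFunc.coe_piecewise_const_zero {m : MeasurableSpace Ω} {s : Set Ω}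
    (hs : MeasurableSet[m] s) (c : ℝ) :
    ⇑(SimpleFunc.piecewise s hs (SimpleFunc.const Ω c) (SimpleFunc.const Ω 0)) =
      s.indicator (fun _ ↦ c) := by
  ext ω
  by_cases hω : ω ∈ s <;> simp [hω]

variable {𝒜 ℬ : MeasurableSpace Ω} {ψ : ℝ}

lemma abs_covariance_simpleFunc_le (h𝒜 : 𝒜 ≤ mΩ) (hℬ : ℬ ≤ mΩ)
    (hψ : ∀ A B, MeasurableSet[𝒜] A → MeasurableSet[ℬ] B →
      |P.real (A ∩ B) - P.real A * P.real B| ≤ ψ * (P.real A * P.real B))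
    (f : @SimpleFunc Ω 𝒜 ℝ) (g : @SimpleFunc Ω ℬ ℝ) :
    |cov[f, g; P]| ≤ ψ * ((∫ ω, |f ω| ∂P) * ∫ ω, |g ω| ∂P) := by
  induction f using SimpleFunc.induction generalizing g with
  | @const c s hs =>
    induction g using SimpleFunc.induction with
    | @const d t ht =>
      rw [SimpleFunc.coe_piecewise_const_zero, SimpleFunc.coe_piecewise_const_zero,
        covariance_indicator_indicator (h𝒜 s hs) (hℬ t ht),
        integral_abs_indicator_const (h𝒜 s hs), integral_abs_indicator_const (hℬ t ht),
        abs_mul, abs_mul]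
      calc |c| * |d| * |P.real (s ∩ t) - P.real s * P.real t|
          ≤ |c| * |d| * (ψ * (P.real s * P.real t)) := by gcongr; exact hψ s t hs ht
        _ = ψ * (P.real s * |c| * (P.real t * |d|)) := by ring
    | @add g₁ g₂ hdisj ih₁ ih₂ =>
      rw [covariance_comm, mul_comm (∫ ω, |_| ∂P)] at ih₁ ih₂ ⊢
      exact abs_covariance_add_left_le (memLp_simpleFunc_of_le hℬ _ _)
        (memLp_simpleFunc_of_le hℬ _ _) (memLp_simpleFunc_of_le h𝒜 _ _) hdisj ih₁ ih₂
  | @add f₁ f₂ hdisj ih₁ ih₂ =>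
    exact abs_covariance_add_left_le (memLp_simpleFunc_of_le h𝒜 _ _)
      (memLp_simpleFunc_of_le h𝒜 _ _) (memLp_simpleFunc_of_le hℬ _ _) hdisj (ih₁ g) (ih₂ g)

lemma abs_covariance_le_of_memLp (h𝒜 : 𝒜 ≤ mΩ) (hℬ : ℬ ≤ mΩ)
    (hψ : ∀ A B, MeasurableSet[𝒜] A → MeasurableSet[ℬ] B →
      |P.real (A ∩ B) - P.real A * P.real B| ≤ ψ * (P.real A * P.real B))
    {X Y : Ω → ℝ} (hX : Measurable[𝒜] X) (hY : Measurable[ℬ] Y) (hX2 : MemLp X 2 P)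
    (hY2 : MemLp Y 2 P) :
    |cov[X, Y; P]| ≤ ψ * ((∫ ω, |X ω| ∂P) * ∫ ω, |Y ω| ∂P) := by
  obtain ⟨f, hfX⟩ := exists_simpleFunc_tendsto_eLpNorm h𝒜 hX hX2
  obtain ⟨g, hgY⟩ := exists_simpleFunc_tendsto_eLpNorm hℬ hY hY2
  have hf n := memLp_simpleFunc_of_le (P := P) h𝒜 (f n) 2
  have hg n := memLp_simpleFunc_of_le (P := P) hℬ (g n) 2
  exact le_of_tendsto_of_tendsto'
    (tendsto_covariance_of_tendsto_eLpNorm hf hX2 hg hY2 hfX hgY).abs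
    (((tendsto_integral_abs_of_tendsto_eLpNorm hf hX2 hfX).mul
      (tendsto_integral_abs_of_tendsto_eLpNorm hg hY2 hgY)).const_mul ψ)
    fun n ↦ abs_covariance_simpleFunc_le h𝒜 hℬ hψ (f n) (g n)

end CovarianceInequality

section Correlation

variable {Ω : Type*} {mΩ : MeasurableSpace Ω} {P : Measure Ω} [IsProbabilityMeasure P]
  {X Y : Ω → ℝ}

lemma integral_abs_sub_integral_le_sqrt_variance (hX : MemLp X 2 P) :
    ∫ ω, |X ω - P[X]| ∂P ≤ √Var[X; P] := by
  have hZ : MemLp (fun ω ↦ |X ω - P[X]|) 2 P := (hX.sub (memLp_const _)).abs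
  have hZsq : P[(fun ω ↦ |X ω - P[X]|) ^ 2] = Var[X; P] := by
    simp [variance_eq_integral hX.aemeasurable]
  have hvar := variance_nonneg (fun ω ↦ |X ω - P[X]|) P
  rw [variance_eq_sub hZ, hZsq] at hvar
  exact Real.le_sqrt_of_sq_le (by linarith)

lemma corrRV_eq_covariance_div (hX : MemLp X 2 P) (hY : MemLp Y 2 P) :
    corrRV P X Y = cov[X, Y; P] / √(Var[X; P] * Var[Y; P]) := by
  rw [corrRV, covariance_eq_sub hX hY, variance_eq_sub hX, variance_eq_sub hY]
  rfl

variable {𝒜 ℬ : MeasurableSpace Ω} {ψ : ℝ}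

lemma abs_covariance_le_mul_sqrt_variance (h𝒜 : 𝒜 ≤ mΩ) (hℬ : ℬ ≤ mΩ)
    (hψ : ∀ A B, MeasurableSet[𝒜] A → MeasurableSet[ℬ] B →
      |P.real (A ∩ B) - P.real A * P.real B| ≤ ψ * (P.real A * P.real B))
    (hψ₀ : 0 ≤ ψ) (hX : Measurable[𝒜] X) (hY : Measurable[ℬ] Y) (hX2 : MemLp X 2 P)
    (hY2 : MemLp Y 2 P) :
    |cov[X, Y; P]| ≤ ψ * √(Var[X; P] * Var[Y; P]) := by
  have hcentered := abs_covariance_le_of_memLp h𝒜 hℬ hψ (hX.sub_const P[X]) (hY.sub_const P[Y])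
    (hX2.sub (memLp_const _)) (hY2.sub (memLp_const _))
  rw [covariance_sub_const_left (hX2.integrable one_le_two),
    covariance_sub_const_right (hY2.integrable one_le_two)] at hcentered
  rw [Real.sqrt_mul (variance_nonneg X P)]
  refine hcentered.trans (mul_le_mul_of_nonneg_left ?_ hψ₀)
  exact mul_le_mul (integral_abs_sub_integral_le_sqrt_variance hX2)
    (integral_abs_sub_integral_le_sqrt_variance hY2) (integral_nonneg fun _ ↦ abs_nonneg _)
    (Real.sqrt_nonneg _)

lemma abs_corrRV_le (h𝒜 : 𝒜 ≤ mΩ) (hℬ : ℬ ≤ mΩ)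
    (hψ : ∀ A B, MeasurableSet[𝒜] A → MeasurableSet[ℬ] B →
      |P.real (A ∩ B) - P.real A * P.real B| ≤ ψ * (P.real A * P.real B))
    (hψ₀ : 0 ≤ ψ) (hX : Measurable[𝒜] X) (hY : Measurable[ℬ] Y) (hX2 : MemLp X 2 P)
    (hY2 : MemLp Y 2 P) :
    |corrRV P X Y| ≤ ψ := by
  rw [corrRV_eq_covariance_div hX2 hY2, abs_div, abs_of_nonneg (Real.sqrt_nonneg _)]
  exact div_le_of_le_mul₀ (Real.sqrt_nonneg _) hψ₀
    (abs_covariance_le_mul_sqrt_variance h𝒜 hℬ hψ hψ₀ hX hY hX2 hY2)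

end Correlation

lemma abs_measureReal_inter_sub_le_psiDep {Ω : Type*} {mΩ : MeasurableSpace Ω} {P : Measure Ω}
    [IsFiniteMeasure P] {𝒜 ℬ : MeasurableSpace Ω} (hψ : psiDep P 𝒜 ℬ ≠ ∞) {A B : Set Ω}
    (hA : MeasurableSet[𝒜] A) (hB : MeasurableSet[ℬ] B) :
    |P.real (A ∩ B) - P.real A * P.real B| ≤ (psiDep P 𝒜 ℬ).toReal * (P.real A * P.real B) := by
  have hratio : |P.real (A ∩ B) - P.real A * P.real B| / (P.real A * P.real B) ≤
      (psiDep P 𝒜 ℬ).toReal := by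
    rw [← ENNReal.ofReal_le_iff_le_toReal hψ]
    exact le_iSup₂_of_le A hA (le_iSup₂_of_le B hB le_rfl)
  have hprod : 0 ≤ P.real A * P.real B := by positivity
  rcases hprod.eq_or_lt with hzero | hpos
  · have hinter : P.real (A ∩ B) = 0 := by
      rcases mul_eq_zero.1 hzero.symm with h | h
      · exact le_antisymm (h ▸ measureReal_mono Set.inter_subset_left) measureReal_nonneg
      · exact le_antisymm (h ▸ measureReal_mono Set.inter_subset_right) measureReal_nonneg
    simp [hinter, ← hzero]
  · exact (div_le_iff₀ hpos).1 hratio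

/-- Eq. (1.5), last part: ρ(A,B) ≤ ψ(A,B). -/
theorem stmt11 {Ω : Type*} {mΩ : MeasurableSpace Ω} (P : Measure Ω) [IsProbabilityMeasure P]
    (𝒜 ℬ : MeasurableSpace Ω) (h𝒜 : 𝒜 ≤ mΩ) (hℬ : ℬ ≤ mΩ) :
    ENNReal.ofReal (rhoDep P 𝒜 ℬ) ≤ psiDep P 𝒜 ℬ := by
  rcases eq_or_ne (psiDep P 𝒜 ℬ) ∞ with hψ | hψ
  · simp [hψ]
  refine ENNReal.ofReal_le_of_le_toReal (Real.sSup_le ?_ ENNReal.toReal_nonneg)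
  rintro r ⟨X, Y, hX, hY, hX2, hY2, rfl⟩
  exact abs_corrRV_le h𝒜 hℬ (fun A B hA hB ↦ abs_measureReal_inter_sub_le_psiDep hψ hA hB)
    ENNReal.toReal_nonneg hX hY hX2 hY2
end

section
/- Suppose (Ω, F, P) is a probability space; A₁, B₁, A₂, B₂ are sub-σ-fields of F such that A₁ ∨ B₁ and A₂ ∨ B₂ are independent; θ := max{τ(A₁, B₁), ψ(A₂, B₂)} < ∞; I and J are positive integers; Cᵢ ∈ A₁ and Dᵢ ∈ A₂ for 1 ≤ i ≤ I, with D₁, ..., D_I a partition of Ω; Eⱼ ∈ B₁ and Fⱼ ∈ B₂ for 1 ≤ j ≤ J, with F₁, ..., F_J a partition of Ω; and A* := ⋃_{i=1}^I (Cᵢ ∩ Dᵢ), B* := ⋃_{j=1}^J (Eⱼ ∩ Fⱼ). Then |P(A* ∩ B*) − P(A*)P(B*)| ≤ θ · [P(A*)·(1 − P(A*))·P(B*)·(1 − P(B*))]^{1/2}. -/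
open MeasureTheory ProbabilityTheory
open scoped ENNReal

/-!
Put `q i = P(Dᵢ)`, `r j = P(Fⱼ)`, `p i j = P(Dᵢ ∩ Fⱼ)` (a coupling of `q` and `r`), and
`c i = P(Cᵢ)`, `e j = P(Eⱼ)`, `f i j = P(Cᵢ ∩ Eⱼ)`. Since `A₁ ∨ B₁` and `A₂ ∨ B₂` are independent
and the `Dᵢ`, resp. `Fⱼ`, are disjoint, `P(A*) = a := ∑ cᵢ qᵢ`, `P(B*) = b := ∑ eⱼ rⱼ` and
`P(A* ∩ B*) = ∑ fᵢⱼ pᵢⱼ`. Then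
  `P(A* ∩ B*) - a b = ∑ pᵢⱼ (fᵢⱼ - cᵢ eⱼ) + ∑ (cᵢ - a)(eⱼ - b)(pᵢⱼ - qᵢ rⱼ)`,
where `τ` bounds the first differences by `θ √(cᵢ(1 - cᵢ) eⱼ(1 - eⱼ))` and `ψ` the second ones by
`θ qᵢ rⱼ`. Cauchy–Schwarz over the pairs `(i, j)` concludes, because by the law of total variance
`∑ pᵢⱼ cᵢ(1 - cᵢ) + ∑ qᵢ rⱼ (cᵢ - a)² = a(1 - a)`, and likewise for `b`.
-/

open Finset

theorem sum_mul_variance_add_sq_sub_mean {ι : Type*} {s : Finset ι} {q c : ι → ℝ}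
    (hq : ∑ i ∈ s, q i = 1) :
    ∑ i ∈ s, (c i * (1 - c i) + (c i - ∑ k ∈ s, c k * q k) ^ 2) * q i =
      (∑ i ∈ s, c i * q i) * (1 - ∑ i ∈ s, c i * q i) := by
  set a := ∑ k ∈ s, c k * q k
  calc ∑ i ∈ s, (c i * (1 - c i) + (c i - a) ^ 2) * q i
      = ∑ i ∈ s, c i * q i * (1 - 2 * a) + ∑ i ∈ s, q i * a ^ 2 := by
        rw [← sum_add_distrib]; exact sum_congr rfl fun i _ => by ring
    _ = a * (1 - a) := by rw [← sum_mul, ← sum_mul, hq]; ring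

theorem add_sq_le_add_mul_add_of_sq_le_mul {x y a b c d : ℝ} (ha : 0 ≤ a) (hb : 0 ≤ b) (hc : 0 ≤ c)
    (hd : 0 ≤ d) (hx : x ^ 2 ≤ a * c) (hy : y ^ 2 ≤ b * d) : (x + y) ^ 2 ≤ (a + b) * (c + d) := by
  have hxy : 2 * (x * y) ≤ a * d + b * c :=
    two_mul_le_add_of_sq_le_mul (mul_nonneg ha hd) (mul_nonneg hb hc) (by nlinarith)
  nlinarith

structure IsCoupling {ι κ : Type*} (s : Finset ι) (t : Finset κ) (p : ι → κ → ℝ)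
    (q : ι → ℝ) (r : κ → ℝ) : Prop where
  nonneg : ∀ i ∈ s, ∀ j ∈ t, 0 ≤ p i j
  sum_right : ∀ i ∈ s, ∑ j ∈ t, p i j = q i
  sum_left : ∀ j ∈ t, ∑ i ∈ s, p i j = r j
  sum_fst_eq_one : ∑ i ∈ s, q i = 1

namespace IsCoupling

variable {ι κ : Type*} {s : Finset ι} {t : Finset κ} {p : ι → κ → ℝ} {q : ι → ℝ} {r : κ → ℝ}

theorem sum_snd_eq_one (h : IsCoupling s t p q r) : ∑ j ∈ t, r j = 1 := by
  rw [← h.sum_fst_eq_one, ← sum_congr rfl h.sum_left, ← sum_congr rfl h.sum_right, sum_comm]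

theorem symm (h : IsCoupling s t p q r) : IsCoupling t s (fun j i => p i j) r q :=
  ⟨fun j hj i hi => h.nonneg i hi j hj, h.sum_left, h.sum_right, h.sum_snd_eq_one⟩

theorem fst_nonneg (h : IsCoupling s t p q r) {i : ι} (hi : i ∈ s) : 0 ≤ q i :=
  h.sum_right i hi ▸ sum_nonneg (h.nonneg i hi)

theorem snd_nonneg (h : IsCoupling s t p q r) {j : κ} (hj : j ∈ t) : 0 ≤ r j :=
  h.symm.fst_nonneg hj

theorem sum_sum_mul_left (h : IsCoupling s t p q r) (g : ι → ℝ) :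
    ∑ i ∈ s, ∑ j ∈ t, g i * p i j = ∑ i ∈ s, g i * q i :=
  sum_congr rfl fun i hi => by rw [← mul_sum, h.sum_right i hi]

theorem sum_sum_mul_right (h : IsCoupling s t p q r) (g : κ → ℝ) :
    ∑ i ∈ s, ∑ j ∈ t, g j * p i j = ∑ j ∈ t, g j * r j := by
  rw [sum_comm]; exact h.symm.sum_sum_mul_left g

theorem sum_sum_mul_fst_mul_snd (h : IsCoupling s t p q r) (g : ι → ℝ) :
    ∑ i ∈ s, ∑ j ∈ t, g i * (q i * r j) = ∑ i ∈ s, g i * q i :=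
  sum_congr rfl fun i _ => by rw [← mul_sum, ← mul_sum, h.sum_snd_eq_one, mul_one]

theorem sum_sum_mul_sub_mul_eq (h : IsCoupling s t p q r) (c : ι → ℝ) (e : κ → ℝ)
    (f : ι → κ → ℝ) :
    ∑ i ∈ s, ∑ j ∈ t, f i j * p i j - (∑ i ∈ s, c i * q i) * (∑ j ∈ t, e j * r j) =
      ∑ i ∈ s, ∑ j ∈ t, (p i j * (f i j - c i * e j) +
        (c i - ∑ k ∈ s, c k * q k) * (e j - ∑ l ∈ t, e l * r l) * (p i j - q i * r j)) := by
  set a := ∑ k ∈ s, c k * q k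
  set b := ∑ l ∈ t, e l * r l
  have hcentered : ∑ j ∈ t, (e j - b) * r j = 0 := by
    simp only [sub_mul, sum_sub_distrib, ← mul_sum, h.sum_snd_eq_one, mul_one, sub_self, b]
  have hmass : ∑ i ∈ s, ∑ j ∈ t, p i j = 1 := by
    rw [sum_congr rfl h.sum_right, h.sum_fst_eq_one]
  have ha : a = ∑ i ∈ s, c i * ∑ j ∈ t, p i j :=
    sum_congr rfl fun i hi => by rw [h.sum_right i hi]
  symm
  calc _ = ∑ i ∈ s, ∑ j ∈ t, (f i j * p i j - a * (e j * p i j) - b * (c i * p i j) +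
        a * b * p i j - (c i - a) * q i * ((e j - b) * r j)) :=
        sum_congr rfl fun i _ => sum_congr rfl fun j _ => by ring
    _ = ∑ i ∈ s, ∑ j ∈ t, f i j * p i j - a * b := by
        simp only [sum_add_distrib, sum_sub_distrib, ← mul_sum]
        rw [← ha, h.sum_sum_mul_right, hmass, ← sum_mul, hcentered]
        ring

theorem abs_sum_sum_mul_sub_le (h : IsCoupling s t p q r) {c : ι → ℝ} {e : κ → ℝ}
    {f : ι → κ → ℝ} {θ : ℝ} (hθ : 0 ≤ θ)
    (hc : ∀ i ∈ s, c i ∈ Set.Icc (0 : ℝ) 1) (he : ∀ j ∈ t, e j ∈ Set.Icc (0 : ℝ) 1)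
    (hf : ∀ i ∈ s, ∀ j ∈ t, |f i j - c i * e j| ≤ θ * √(c i * (1 - c i) * e j * (1 - e j)))
    (hp : ∀ i ∈ s, ∀ j ∈ t, |p i j - q i * r j| ≤ θ * (q i * r j)) :
    |∑ i ∈ s, ∑ j ∈ t, f i j * p i j - (∑ i ∈ s, c i * q i) * (∑ j ∈ t, e j * r j)| ≤
      θ * √((∑ i ∈ s, c i * q i) * (1 - ∑ i ∈ s, c i * q i) *
        (∑ j ∈ t, e j * r j) * (1 - ∑ j ∈ t, e j * r j)) := by
  set a := ∑ i ∈ s, c i * q i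
  set b := ∑ j ∈ t, e j * r j
  set R : ι × κ → ℝ := fun x => p x.1 x.2 * √(c x.1 * (1 - c x.1) * e x.2 * (1 - e x.2)) +
    q x.1 * r x.2 * (|c x.1 - a| * |e x.2 - b|)
  set F : ι × κ → ℝ := fun x =>
    c x.1 * (1 - c x.1) * p x.1 x.2 + (c x.1 - a) ^ 2 * (q x.1 * r x.2)
  set G : ι × κ → ℝ := fun x =>
    e x.2 * (1 - e x.2) * p x.1 x.2 + (e x.2 - b) ^ 2 * (r x.2 * q x.1)
  have hvar_c : ∀ i ∈ s, 0 ≤ c i * (1 - c i) := fun i hi =>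
    mul_nonneg (hc i hi).1 (sub_nonneg.2 (hc i hi).2)
  have hvar_e : ∀ j ∈ t, 0 ≤ e j * (1 - e j) := fun j hj =>
    mul_nonneg (he j hj).1 (sub_nonneg.2 (he j hj).2)
  have hterm : ∀ x ∈ s ×ˢ t, |p x.1 x.2 * (f x.1 x.2 - c x.1 * e x.2) +
      (c x.1 - a) * (e x.2 - b) * (p x.1 x.2 - q x.1 * r x.2)| ≤ θ * R x := by
    rintro ⟨i, j⟩ hx
    obtain ⟨hi, hj⟩ := mem_product.1 hx
    calc _ ≤ p i j * |f i j - c i * e j| + |c i - a| * |e j - b| * |p i j - q i * r j| := by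
          grw [abs_add_le, abs_mul, abs_mul, abs_mul, abs_of_nonneg (h.nonneg i hi j hj)]
      _ ≤ p i j * (θ * √(c i * (1 - c i) * e j * (1 - e j))) +
          |c i - a| * |e j - b| * (θ * (q i * r j)) := by
          gcongr
          exacts [h.nonneg i hi j hj, hf i hi j hj, hp i hi j hj]
      _ = θ * R (i, j) := by simp only [R]; ring
  have hpointwise : ∀ x ∈ s ×ˢ t, 0 ≤ F x ∧ 0 ≤ G x ∧ R x ^ 2 ≤ F x * G x := by
    rintro ⟨i, j⟩ hx
    obtain ⟨hi, hj⟩ := mem_product.1 hx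
    simp only [R, F, G]
    have hpij := h.nonneg i hi j hj
    have hqr := mul_nonneg (h.fst_nonneg hi) (h.snd_nonneg hj)
    have hF₁ := mul_nonneg (hvar_c i hi) hpij
    have hF₂ := mul_nonneg (sq_nonneg (c i - a)) hqr
    have hG₁ := mul_nonneg (hvar_e j hj) hpij
    have hG₂ := mul_nonneg (sq_nonneg (e j - b)) (mul_comm (q i) (r j) ▸ hqr)
    refine ⟨add_nonneg hF₁ hF₂, add_nonneg hG₁ hG₂,
      add_sq_le_add_mul_add_of_sq_le_mul hF₁ hF₂ hG₁ hG₂ (le_of_eq ?_) (le_of_eq ?_)⟩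
    · have hV : 0 ≤ c i * (1 - c i) * e j * (1 - e j) := by
        simpa only [mul_assoc] using mul_nonneg (hvar_c i hi) (hvar_e j hj)
      rw [mul_pow, Real.sq_sqrt hV]
      ring
    · simp only [mul_pow, sq_abs]
      ring
  have hcauchy : ∑ x ∈ s ×ˢ t, R x ≤ √((∑ x ∈ s ×ˢ t, F x) * ∑ x ∈ s ×ˢ t, G x) :=
    (le_abs_self _).trans <| Real.abs_le_sqrt <| sum_sq_le_sum_mul_sum_of_sq_le_mul _
      (fun x hx => (hpointwise x hx).1) (fun x hx => (hpointwise x hx).2.1)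
      (fun x hx => (hpointwise x hx).2.2)
  have hF : ∑ x ∈ s ×ˢ t, F x = a * (1 - a) := by
    rw [sum_product, ← sum_mul_variance_add_sq_sub_mean h.sum_fst_eq_one]
    simp only [F, a, add_mul, sum_add_distrib, h.sum_sum_mul_left, h.sum_sum_mul_fst_mul_snd]
  have hG : ∑ x ∈ s ×ˢ t, G x = b * (1 - b) := by
    rw [sum_product_right, ← sum_mul_variance_add_sq_sub_mean h.sum_snd_eq_one]
    simp only [G, b, add_mul, sum_add_distrib, h.symm.sum_sum_mul_left,
      h.symm.sum_sum_mul_fst_mul_snd]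
  rw [h.sum_sum_mul_sub_mul_eq c e f, ← sum_product']
  calc _ ≤ ∑ x ∈ s ×ˢ t, θ * R x := (abs_sum_le_sum_abs _ _).trans (sum_le_sum hterm)
    _ ≤ θ * √((∑ x ∈ s ×ˢ t, F x) * ∑ x ∈ s ×ˢ t, G x) := by
      rw [← mul_sum]; exact mul_le_mul_of_nonneg_left hcauchy hθ
    _ = θ * √(a * (1 - a) * b * (1 - b)) := by rw [hF, hG, ← mul_assoc]

end IsCoupling

section

variable {Ω : Type*} {mΩ : MeasurableSpace Ω} {μ : Measure Ω}

theorem abs_measureReal_inter_sub_mul_le_sqrt [IsProbabilityMeasure μ] (A : Set Ω)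
    {B : Set Ω} (hB : MeasurableSet B) :
    |μ.real (A ∩ B) - μ.real A * μ.real B| ≤
      √(μ.real A * (1 - μ.real A) * μ.real B * (1 - μ.real B)) := by
  refine Real.abs_le_sqrt ?_
  have hx : 0 ≤ μ.real (A ∩ B) := measureReal_nonneg
  have hxA : μ.real (A ∩ B) ≤ μ.real A := measureReal_mono Set.inter_subset_left
  have hxB : μ.real (A ∩ B) ≤ μ.real B := measureReal_mono Set.inter_subset_right
  have hxAB : μ.real A + μ.real B - 1 ≤ μ.real (A ∩ B) := by
    linarith [measureReal_union_add_inter (μ := μ) (s := A) hB,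
      measureReal_le_one (μ := μ) (s := A ∪ B)]
  -- the factors are the cells of the 2 × 2 table of `A` and `B`
  nlinarith [mul_nonneg (mul_nonneg hx (sub_nonneg.2 hxA))
      (mul_nonneg (sub_nonneg.2 hxB) (sub_nonneg.2 hxAB)),
    mul_nonneg hx (sub_nonneg.2 hxAB), mul_nonneg (sub_nonneg.2 hxA) (sub_nonneg.2 hxB)]

theorem eventCorr_eq (A B : Set Ω) :
    eventCorr μ A B = (μ.real (A ∩ B) - μ.real A * μ.real B) /
      √(μ.real A * (1 - μ.real A) * μ.real B * (1 - μ.real B)) := rfl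

theorem abs_eventCorr_le_one [IsProbabilityMeasure μ] (A : Set Ω) {B : Set Ω}
    (hB : MeasurableSet B) : |eventCorr μ A B| ≤ 1 := by
  rw [eventCorr_eq, abs_div, abs_of_nonneg (Real.sqrt_nonneg _)]
  exact div_le_one_of_le₀ (abs_measureReal_inter_sub_mul_le_sqrt A hB) (Real.sqrt_nonneg _)

theorem abs_measureReal_inter_sub_mul_le_tauDep [IsProbabilityMeasure μ]
    {𝒜 ℬ : MeasurableSpace Ω} (hℬ : ℬ ≤ mΩ) {A B : Set Ω} (hA : MeasurableSet[𝒜] A)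
    (hB : MeasurableSet[ℬ] B) :
    |μ.real (A ∩ B) - μ.real A * μ.real B| ≤
      tauDep μ 𝒜 ℬ * √(μ.real A * (1 - μ.real A) * μ.real B * (1 - μ.real B)) := by
  have hbdd : BddAbove {r : ℝ | ∃ A B : Set Ω, MeasurableSet[𝒜] A ∧ MeasurableSet[ℬ] B ∧
      r = |eventCorr μ A B|} := by
    refine ⟨1, ?_⟩
    rintro r ⟨A, B, -, hB, rfl⟩
    exact abs_eventCorr_le_one A (hℬ B hB)
  have hcorr : |eventCorr μ A B| ≤ tauDep μ 𝒜 ℬ := le_csSup hbdd ⟨A, B, hA, hB, rfl⟩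
  rcases (Real.sqrt_nonneg (μ.real A * (1 - μ.real A) * μ.real B * (1 - μ.real B))).eq_or_lt
    with hzero | hpos
  · simpa [← hzero] using abs_measureReal_inter_sub_mul_le_sqrt (μ := μ) A (hℬ B hB)
  · rwa [eventCorr_eq, abs_div, abs_of_pos hpos, div_le_iff₀ hpos] at hcorr

theorem abs_measureReal_inter_sub_mul_le_psiDep [IsFiniteMeasure μ] {𝒜 ℬ : MeasurableSpace Ω}
    (hψ : psiDep μ 𝒜 ℬ ≠ ∞) {A B : Set Ω} (hA : MeasurableSet[𝒜] A)
    (hB : MeasurableSet[ℬ] B) :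
    |μ.real (A ∩ B) - μ.real A * μ.real B| ≤ (psiDep μ 𝒜 ℬ).toReal * (μ.real A * μ.real B) := by
  rcases (mul_nonneg (measureReal_nonneg (μ := μ) (s := A))
    (measureReal_nonneg (μ := μ) (s := B))).eq_or_lt with hzero | hpos
  · have hinter : μ.real (A ∩ B) = 0 := by
      refine le_antisymm ?_ measureReal_nonneg
      rcases mul_eq_zero.1 hzero.symm with h | h
      · exact h ▸ measureReal_mono Set.inter_subset_left
      · exact h ▸ measureReal_mono Set.inter_subset_right
    simp [hinter, ← hzero]
  · have hratio : ENNReal.ofReal (|μ.real (A ∩ B) - μ.real A * μ.real B| / (μ.real A * μ.real B))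
        ≤ psiDep μ 𝒜 ℬ :=
      le_iSup₂_of_le A hA (le_iSup₂_of_le (f := fun B (_ : MeasurableSet[ℬ] B) => _) B hB le_rfl)
    rw [← div_le_iff₀ hpos]
    exact (ENNReal.ofReal_le_iff_le_toReal hψ).1 hratio

end

section

variable {Ω α ι κ : Type*} {mΩ : MeasurableSpace Ω} {μ : Measure Ω}

theorem Set.PairwiseDisjoint.inter_prod {s : Set ι} {t : Set κ} {D : ι → Set α}
    {F : κ → Set α} (hD : s.PairwiseDisjoint D) (hF : t.PairwiseDisjoint F) :
    (s ×ˢ t).PairwiseDisjoint fun x => D x.1 ∩ F x.2 :=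
  fun _ hx _ hy hxy => ((hD.prod hF) hx hy hxy).preimage fun a => (a, a)

theorem Set.biUnion_inter_inter_biUnion_inter (s : Finset ι) (t : Finset κ)
    (C D : ι → Set α) (E F : κ → Set α) :
    (⋃ i ∈ s, C i ∩ D i) ∩ (⋃ j ∈ t, E j ∩ F j) =
      ⋃ x ∈ s ×ˢ t, (C x.1 ∩ E x.2) ∩ (D x.1 ∩ F x.2) := by
  ext ω
  simp only [Set.mem_inter_iff, Set.mem_iUnion, mem_product, exists_prop, Prod.exists]
  grind

theorem measureReal_eq_sum_measureReal_inter [IsFiniteMeasure μ] {s : Finset ι}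
    {D : ι → Set Ω} (hD : ∀ i ∈ s, MeasurableSet (D i)) (hdisj : (s : Set ι).PairwiseDisjoint D)
    (hcover : ⋃ i ∈ s, D i = Set.univ) {G : Set Ω} (hG : MeasurableSet G) :
    μ.real G = ∑ i ∈ s, μ.real (G ∩ D i) := by
  conv_lhs => rw [← Set.inter_univ G, ← hcover, Set.inter_iUnion₂]
  exact measureReal_biUnion_finset (hdisj.mono fun i => Set.inter_subset_right)
    fun i hi => hG.inter (hD i hi)

theorem isCoupling_measureReal_inter [IsProbabilityMeasure μ] {s : Finset ι} {t : Finset κ}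
    {D : ι → Set Ω} {F : κ → Set Ω} (hD : ∀ i ∈ s, MeasurableSet (D i))
    (hDdisj : (s : Set ι).PairwiseDisjoint D) (hDcover : ⋃ i ∈ s, D i = Set.univ)
    (hF : ∀ j ∈ t, MeasurableSet (F j))
    (hFdisj : (t : Set κ).PairwiseDisjoint F) (hFcover : ⋃ j ∈ t, F j = Set.univ) :
    IsCoupling s t (fun i j => μ.real (D i ∩ F j)) (fun i => μ.real (D i))
      (fun j => μ.real (F j)) where
  nonneg _ _ _ _ := measureReal_nonneg
  sum_right i hi := (measureReal_eq_sum_measureReal_inter hF hFdisj hFcover (hD i hi)).symm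
  sum_left j hj := by
    simp only [Set.inter_comm (D _)]
    exact (measureReal_eq_sum_measureReal_inter hD hDdisj hDcover (hF j hj)).symm
  sum_fst_eq_one := by
    simpa using (measureReal_eq_sum_measureReal_inter (μ := μ) hD hDdisj hDcover
      MeasurableSet.univ).symm

theorem measureReal_biUnion_inter_of_indep [IsFiniteMeasure μ] {𝒢 ℋ : MeasurableSpace Ω}
    (h𝒢 : 𝒢 ≤ mΩ) (hℋ : ℋ ≤ mΩ) (hind : Indep 𝒢 ℋ μ) {s : Finset ι} {C D : ι → Set Ω}
    (hC : ∀ i ∈ s, MeasurableSet[𝒢] (C i)) (hD : ∀ i ∈ s, MeasurableSet[ℋ] (D i))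
    (hdisj : (s : Set ι).PairwiseDisjoint D) :
    μ.real (⋃ i ∈ s, C i ∩ D i) = ∑ i ∈ s, μ.real (C i) * μ.real (D i) := by
  rw [measureReal_biUnion_finset (hdisj.mono fun i => Set.inter_subset_right)
    fun i hi => (h𝒢 _ (hC i hi)).inter (hℋ _ (hD i hi))]
  refine sum_congr rfl fun i hi => ?_
  simp only [measureReal_def, (Indep_iff 𝒢 ℋ μ).1 hind _ _ (hC i hi) (hD i hi),
    ENNReal.toReal_mul]

theorem measureReal_biUnion_inter_inter_biUnion_inter_of_indep [IsFiniteMeasure μ]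
    {𝒢 ℋ : MeasurableSpace Ω} (h𝒢 : 𝒢 ≤ mΩ) (hℋ : ℋ ≤ mΩ) (hind : Indep 𝒢 ℋ μ)
    {s : Finset ι} {t : Finset κ} {C D : ι → Set Ω} {E F : κ → Set Ω}
    (hC : ∀ i ∈ s, MeasurableSet[𝒢] (C i)) (hD : ∀ i ∈ s, MeasurableSet[ℋ] (D i))
    (hE : ∀ j ∈ t, MeasurableSet[𝒢] (E j)) (hF : ∀ j ∈ t, MeasurableSet[ℋ] (F j))
    (hDdisj : (s : Set ι).PairwiseDisjoint D) (hFdisj : (t : Set κ).PairwiseDisjoint F) :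
    μ.real ((⋃ i ∈ s, C i ∩ D i) ∩ (⋃ j ∈ t, E j ∩ F j)) =
      ∑ i ∈ s, ∑ j ∈ t, μ.real (C i ∩ E j) * μ.real (D i ∩ F j) := by
  rw [Set.biUnion_inter_inter_biUnion_inter, ← sum_product']
  refine measureReal_biUnion_inter_of_indep h𝒢 hℋ hind (fun x hx => ?_) (fun x hx => ?_)
    (by simpa using hDdisj.inter_prod hFdisj)
  all_goals obtain ⟨hi, hj⟩ := mem_product.1 hx
  exacts [(hC _ hi).inter (hE _ hj), (hD _ hi).inter (hF _ hj)]

end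

theorem stmt19_general {Ω : Type*} {mΩ : MeasurableSpace Ω} (P : Measure Ω) [IsProbabilityMeasure P]
    (𝒜₁ ℬ₁ 𝒜₂ ℬ₂ : MeasurableSpace Ω)
    (h𝒜₁ : 𝒜₁ ≤ mΩ) (hℬ₁ : ℬ₁ ≤ mΩ) (h𝒜₂ : 𝒜₂ ≤ mΩ) (hℬ₂ : ℬ₂ ≤ mΩ)
    (hIndep : Indep (𝒜₁ ⊔ ℬ₁) (𝒜₂ ⊔ ℬ₂) P)
    (hψ : psiDep P 𝒜₂ ℬ₂ ≠ ⊤)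
    (θ : ℝ) (hθ : θ = max (tauDep P 𝒜₁ ℬ₁) (psiDep P 𝒜₂ ℬ₂).toReal)
    (I J : ℕ)
    (C D E F : ℕ → Set Ω)
    (hC : ∀ i < I, MeasurableSet[𝒜₁] (C i)) (hD : ∀ i < I, MeasurableSet[𝒜₂] (D i))
    (hE : ∀ j < J, MeasurableSet[ℬ₁] (E j)) (hF : ∀ j < J, MeasurableSet[ℬ₂] (F j))
    (hDdisj : ∀ i < I, ∀ j < I, i ≠ j → Disjoint (D i) (D j))
    (hDcover : (⋃ i ∈ Finset.range I, D i) = Set.univ)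
    (hFdisj : ∀ i < J, ∀ j < J, i ≠ j → Disjoint (F i) (F j))
    (hFcover : (⋃ j ∈ Finset.range J, F j) = Set.univ)
    (Astar Bstar : Set Ω)
    (hAstar : Astar = ⋃ i ∈ Finset.range I, C i ∩ D i)
    (hBstar : Bstar = ⋃ j ∈ Finset.range J, E j ∩ F j) :
    |(P (Astar ∩ Bstar)).toReal - (P Astar).toReal * (P Bstar).toReal| ≤
      θ * Real.sqrt ((P Astar).toReal * (1 - (P Astar).toReal) *
        (P Bstar).toReal * (1 - (P Bstar).toReal)) := by
  subst hAstar hBstar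
  simp only [← mem_range] at hC hD hE hF hDdisj hFdisj
  have hDdisj' : (range I : Set ℕ).PairwiseDisjoint D := fun i hi j hj => hDdisj i hi j hj
  have hFdisj' : (range J : Set ℕ).PairwiseDisjoint F := fun i hi j hj => hFdisj i hi j hj
  have hC' i hi : MeasurableSet[𝒜₁ ⊔ ℬ₁] (C i) := le_sup_left (a := 𝒜₁) _ (hC i hi)
  have hE' j hj : MeasurableSet[𝒜₁ ⊔ ℬ₁] (E j) := le_sup_right (b := ℬ₁) _ (hE j hj)
  have hD' i hi : MeasurableSet[𝒜₂ ⊔ ℬ₂] (D i) := le_sup_left (a := 𝒜₂) _ (hD i hi)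
  have hF' j hj : MeasurableSet[𝒜₂ ⊔ ℬ₂] (F j) := le_sup_right (b := ℬ₂) _ (hF j hj)
  have hτθ : tauDep P 𝒜₁ ℬ₁ ≤ θ := hθ ▸ le_max_left _ _
  have hψθ : (psiDep P 𝒜₂ ℬ₂).toReal ≤ θ := hθ ▸ le_max_right _ _
  have key := (isCoupling_measureReal_inter (fun i hi => h𝒜₂ _ (hD i hi)) hDdisj' hDcover
    (fun j hj => hℬ₂ _ (hF j hj)) hFdisj' hFcover).abs_sum_sum_mul_sub_le
    (c := fun i => P.real (C i)) (e := fun j => P.real (E j))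
    (f := fun i j => P.real (C i ∩ E j)) (ENNReal.toReal_nonneg.trans hψθ)
    (fun _ _ => ⟨measureReal_nonneg, measureReal_le_one⟩)
    (fun _ _ => ⟨measureReal_nonneg, measureReal_le_one⟩)
    (fun i hi j hj => (abs_measureReal_inter_sub_mul_le_tauDep hℬ₁ (hC i hi) (hE j hj)).trans
      (by gcongr))
    (fun i hi j hj => (abs_measureReal_inter_sub_mul_le_psiDep hψ (hD i hi) (hF j hj)).trans
      (by gcongr))
  have h𝒢 : 𝒜₁ ⊔ ℬ₁ ≤ mΩ := sup_le h𝒜₁ hℬ₁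
  have hℋ : 𝒜₂ ⊔ ℬ₂ ≤ mΩ := sup_le h𝒜₂ hℬ₂
  rwa [← measureReal_biUnion_inter_of_indep h𝒢 hℋ hIndep hC' hD' hDdisj',
    ← measureReal_biUnion_inter_of_indep h𝒢 hℋ hIndep hE' hF' hFdisj',
    ← measureReal_biUnion_inter_inter_biUnion_inter_of_indep h𝒢 hℋ hIndep hC' hD' hE' hF'
      hDdisj' hFdisj'] at key

/-- Eq. (2.7): the key inequality in the proof of Theorem 4. -/
theorem stmt19 {Ω : Type*} {mΩ : MeasurableSpace Ω} (P : Measure Ω) [IsProbabilityMeasure P]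
    (𝒜₁ ℬ₁ 𝒜₂ ℬ₂ : MeasurableSpace Ω)
    (h𝒜₁ : 𝒜₁ ≤ mΩ) (hℬ₁ : ℬ₁ ≤ mΩ) (h𝒜₂ : 𝒜₂ ≤ mΩ) (hℬ₂ : ℬ₂ ≤ mΩ)
    (hIndep : Indep (𝒜₁ ⊔ ℬ₁) (𝒜₂ ⊔ ℬ₂) P)
    (hψ : psiDep P 𝒜₂ ℬ₂ ≠ ⊤)
    (θ : ℝ) (hθ : θ = max (tauDep P 𝒜₁ ℬ₁) (psiDep P 𝒜₂ ℬ₂).toReal)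
    (I J : ℕ) (hI : 0 < I) (hJ : 0 < J)
    (C D E F : ℕ → Set Ω)
    (hC : ∀ i < I, MeasurableSet[𝒜₁] (C i)) (hD : ∀ i < I, MeasurableSet[𝒜₂] (D i))
    (hE : ∀ j < J, MeasurableSet[ℬ₁] (E j)) (hF : ∀ j < J, MeasurableSet[ℬ₂] (F j))
    (hDdisj : ∀ i < I, ∀ j < I, i ≠ j → Disjoint (D i) (D j))
    (hDcover : (⋃ i ∈ Finset.range I, D i) = Set.univ)
    (hFdisj : ∀ i < J, ∀ j < J, i ≠ j → Disjoint (F i) (F j))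
    (hFcover : (⋃ j ∈ Finset.range J, F j) = Set.univ)
    (Astar Bstar : Set Ω)
    (hAstar : Astar = ⋃ i ∈ Finset.range I, C i ∩ D i)
    (hBstar : Bstar = ⋃ j ∈ Finset.range J, E j ∩ F j) :
    |(P (Astar ∩ Bstar)).toReal - (P Astar).toReal * (P Bstar).toReal| ≤
      θ * Real.sqrt ((P Astar).toReal * (1 - (P Astar).toReal) *
        (P Bstar).toReal * (1 - (P Bstar).toReal)) :=
  stmt19_general P 𝒜₁ ℬ₁ 𝒜₂ ℬ₂ h𝒜₁ hℬ₁ h𝒜₂ hℬ₂ hIndep hψ θ hθ I J C D E F hC hD hE hF hDdisj hDcover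
    hFdisj hFcover Astar Bstar hAstar hBstar
end
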